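/- For every integer n ≥ 1, the complete bipartite graph K_{n,n} is not equitably DP 2n-colorable; that is, there exists a 2n-cover H of K_{n,n} admitting no 1-bounded H-coloring. -/
import Mathlib


/-- A DP-cover (correspondence cover) of a graph `G` with colors in `Γ`:
lists `L v`, and a symmetric adjacency relation between nodes `(v, γ)`
that projects to edges of `G` and is a partial matching between fibers. -/
structure DPCover {V : Type*} (G : SimpleGraph V) (Γ : Type*) where
  L : V → Finset Γ
  Adj : V × Γ → V × Γ → Prop
  symm : ∀ p q, Adj p q → Adj q p
  adj_sub : ∀ u α w β, Adj (u, α) (w, β) → G.Adj u w ∧ α ∈ L u ∧ β ∈ L w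
  matching : ∀ u α w β β', Adj (u, α) (w, β) → Adj (u, α) (w, β') → β = β'

/-- `H` is a `k`-cover: every list has size `k`. -/
def DPCover.IsKCover {V Γ : Type*} {G : SimpleGraph V} (H : DPCover G Γ) (k : ℕ) : Prop :=
  ∀ v, (H.L v).card = k

/-- An `H`-coloring: a choice from every list whose graph is independent in the cover. -/
def DPCover.IsColoring {V Γ : Type*} {G : SimpleGraph V} (H : DPCover G Γ) (f : V → Γ) : Prop :=
  (∀ v, f v ∈ H.L v) ∧ ∀ u w, ¬ H.Adj (u, f u) (w, f w)

/-- The size of the color class of `γ` under `f`. -/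
def classSize {V Γ : Type*} [Fintype V] [DecidableEq Γ] (f : V → Γ) (γ : Γ) : ℕ :=
  (Finset.univ.filter fun v => f v = γ).card

/-- Every color class has size at most `m`. -/
def IsBounded {V Γ : Type*} [Fintype V] [DecidableEq Γ] (m : ℕ) (f : V → Γ) : Prop :=
  ∀ γ, classSize f γ ≤ m

/-- `f` is `⌈n/k⌉`-bounded and at most `n % k` color classes have size `⌊n/k⌋ + 1`. -/
def IsStronglyBounded {V Γ : Type*} [Fintype V] [DecidableEq Γ] (n k : ℕ) (f : V → Γ) : Prop :=
  IsBounded ((n + k - 1) / k) f ∧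
  ((Finset.univ.image f).filter fun γ => classSize f γ = n / k + 1).card ≤ n % k

/-- `G` is equitably DP `k`-colorable: every `k`-cover admits a `⌈n/k⌉`-bounded coloring. -/
def EDPColorable {V : Type*} [Fintype V] (G : SimpleGraph V) (k : ℕ) : Prop :=
  ∀ H : DPCover G ℕ, H.IsKCover k →
    ∃ f, H.IsColoring f ∧ IsBounded ((Fintype.card V + k - 1) / k) f

/-- `G` is strongly equitably DP `k`-colorable: every `k`-cover admits a strongly
`⌈n/k⌉`-bounded coloring. -/
def SEDPColorable {V : Type*} [Fintype V] (G : SimpleGraph V) (k : ℕ) : Prop :=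
  ∀ H : DPCover G ℕ, H.IsKCover k →
    ∃ f, H.IsColoring f ∧ IsStronglyBounded (Fintype.card V) k f

-- auxiliary
lemma mod_succ_inj {m x y : ℕ} (hx : x < m) (hy : y < m) (h : (x+1) % m = (y+1) % m) : x = y := by
  have key : ∀ z, z < m → (z+1) % m = if z+1 = m then 0 else z+1 := by
    intro z hz
    split
    · next hm => rw [hm, Nat.mod_self]
    · next hm => exact Nat.mod_eq_of_lt (by omega)
  rw [key x hx, key y hy] at h
  split at h <;> split at h <;> omega

def badCover (n : ℕ) : DPCover (completeBipartiteGraph (Fin n) (Fin n)) ℕ where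
  L _ := Finset.range (2*n)
  Adj p q :=
    (p.1.isLeft ∧ q.1.isRight ∧ p.2 < 2*n ∧ q.2 = (p.2+1) % (2*n)) ∨
    (q.1.isLeft ∧ p.1.isRight ∧ q.2 < 2*n ∧ p.2 = (q.2+1) % (2*n))
  symm p q h := h.symm
  adj_sub u α w β h := by
    have hpos : 0 < 2*n := by
      rcases h with ⟨h1,h2,h3,h4⟩|⟨h1,h2,h3,h4⟩ <;> cases u <;> cases w <;> simp_all <;> omega
    constructor
    · rcases h with ⟨h1,h2,_⟩|⟨h1,h2,_⟩
      · exact Or.inl ⟨h1, h2⟩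
      · exact Or.inr ⟨h2, h1⟩
    · rcases h with ⟨h1,h2,h3,h4⟩|⟨h1,h2,h3,h4⟩ <;>
        simp only [Finset.mem_range] <;>
        constructor <;> first
          | omega
          | (subst h4; exact Nat.mod_lt _ hpos)
  matching u α w β β' h h' := by
    rcases h with ⟨h1,h2,h3,h4⟩|⟨h1,h2,h3,h4⟩ <;>
      rcases h' with ⟨g1,g2,g3,g4⟩|⟨g1,g2,g3,g4⟩
    · omega
    · cases u <;> simp_all
    · cases u <;> simp_all
    · exact mod_succ_inj h3 g3 (by rw [← h4, ← g4])

/-- For every `n ≥ 1`, the complete bipartite graph `K_{n,n}` is not equitably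
DP `2n`-colorable: some `2n`-cover admits no 1-bounded coloring. -/
theorem completeBipartite_not_EDP_colorable (n : ℕ) (hn : 1 ≤ n) :
    ¬ EDPColorable (completeBipartiteGraph (Fin n) (Fin n)) (2 * n) := by
  intro hEDP
  haveI : NeZero (2*n) := ⟨by omega⟩
  have hK : (badCover n).IsKCover (2*n) := fun v => Finset.card_range _
  obtain ⟨f, ⟨hf1, hf2⟩, hbound⟩ := hEDP (badCover n) hK
  -- the bound is 1
  have hcard : Fintype.card (Fin n ⊕ Fin n) = 2*n := by simp; omega
  have hb1 : IsBounded 1 f := by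
    have : (Fintype.card (Fin n ⊕ Fin n) + 2*n - 1) / (2*n) = 1 := by
      rw [hcard]
      exact Nat.div_eq_of_lt_le (by omega) (by omega)
    rwa [this] at hbound
  -- f injective
  have hfi : Function.Injective f := by
    intro u w h
    by_contra hne
    have h1 := hb1 (f u)
    have hsub : ({u, w} : Finset _) ⊆ Finset.univ.filter (fun v => f v = f u) := by
      intro x hx
      simp only [Finset.mem_insert, Finset.mem_singleton] at hx
      rcases hx with rfl | rfl <;> simp [h]
    have h2 := Finset.card_le_card hsub
    rw [Finset.card_insert_of_notMem (by simpa using hne), Finset.card_singleton] at h2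
    unfold IsBounded classSize at h1
    omega
  have hlt : ∀ v, f v < 2*n := fun v => by
    have := hf1 v; simpa [badCover] using this
  set F : Fin n ⊕ Fin n → ZMod (2*n) := fun v => (f v : ZMod (2*n)) with hF
  have hFi : Function.Injective F := by
    intro u w h
    apply hfi
    have := congrArg ZMod.val h
    rwa [ZMod.val_cast_of_lt (hlt u), ZMod.val_cast_of_lt (hlt w)] at this
  have hFs : Function.Surjective F := by
    have := (Fintype.bijective_iff_injective_and_card F).mpr ⟨hFi, by rw [ZMod.card]; exact hcard⟩
    exact this.2
  have hcon : ∀ i j, F (Sum.inr j) ≠ F (Sum.inl i) + 1 := by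
    intro i j h
    apply hf2 (Sum.inl i) (Sum.inr j)
    left
    refine ⟨by simp, by simp, hlt _, ?_⟩
    have h2 : F (Sum.inr j) = ((f (Sum.inl i) + 1) % (2*n) : ℕ) := by
      simp only [hF, ZMod.natCast_mod, Nat.cast_add, Nat.cast_one]; exact h
    have := congrArg ZMod.val h2
    rwa [hF, ZMod.val_cast_of_lt (hlt _), ZMod.val_cast_of_lt (Nat.mod_lt _ (by omega))] at this
  have hstep : ∀ x : ZMod (2*n), (∃ i, F (Sum.inl i) = x) → ∃ i, F (Sum.inl i) = x + 1 := by
    rintro x ⟨i, hi⟩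
    obtain ⟨v, hv⟩ := hFs (x + 1)
    cases v with
    | inl i' => exact ⟨i', hv⟩
    | inr j => exact absurd (hv.trans (by rw [hi])) (hcon i j)
  have i0 : Fin n := ⟨0, hn⟩
  have horbit : ∀ k : ℕ, ∃ i, F (Sum.inl i) = F (Sum.inl i0) + (k : ZMod (2*n)) := by
    intro k
    induction k with
    | zero => exact ⟨i0, by simp⟩
    | succ k ih =>
      obtain ⟨i, hi⟩ := ih
      obtain ⟨i', hi'⟩ := hstep _ ⟨i, hi⟩
      exact ⟨i', by rw [hi']; push_cast; ring⟩
  obtain ⟨i, hi⟩ := horbit (F (Sum.inr i0) - F (Sum.inl i0)).val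
  rw [ZMod.natCast_val, ZMod.cast_id] at hi
  have : F (Sum.inl i) = F (Sum.inr i0) := by rw [hi]; ring
  exact absurd (hFi this) (by simp)
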